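/- Confinement: in the simple tagged command language, if a command C is well-typed under program counter pc = high, then executing C changes no low variable: ⟨C, M⟩ ⇓ M' implies M(x) = M'(x) for every variable x with Γ(x) = low. -/

import Mathlib

/-- Integer expressions: literals, variables, and `+`. -/
inductive AExp : Type
  | lit (n : ℤ)
  | var (x : ℕ)
  | add (a b : AExp)

/-- Evaluation of expressions over total integer memories. -/
def evalE (M : ℕ → ℤ) : AExp → ℤ
  | .lit n => n
  | .var x => M x
  | .add a b => evalE M a + evalE M b

/-- Security levels: `false` = low, `true` = high (`low ⊑ high`). -/
abbrev Lvl := Bool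

/-- The level of an expression under `Γ`: high iff some variable is high. -/
def levelOf (Γ : ℕ → Lvl) : AExp → Lvl
  | .lit _ => false
  | .var x => Γ x
  | .add a b => levelOf Γ a || levelOf Γ b

/-- While-free commands: skip, sequencing, assignment, equality conditional. -/
inductive Cmd : Type
  | skip
  | seq (c₁ c₂ : Cmd)
  | assign (x : ℕ) (e : AExp)
  | ite (e₁ e₂ : AExp) (c₁ c₂ : Cmd)

/-- The security type system. -/
inductive WT (Γ : ℕ → Lvl) : Lvl → Cmd → Prop
  | skip {pc} : WT Γ pc .skip
  | seq {pc c₁ c₂} : WT Γ pc c₁ → WT Γ pc c₂ → WT Γ pc (.seq c₁ c₂)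
  | assign {pc x e} : (levelOf Γ e || pc) ≤ Γ x → WT Γ pc (.assign x e)
  | ite {pc e₁ e₂ c₁ c₂} :
      WT Γ (pc || levelOf Γ e₁ || levelOf Γ e₂) c₁ →
      WT Γ (pc || levelOf Γ e₁ || levelOf Γ e₂) c₂ →
      WT Γ pc (.ite e₁ e₂ c₁ c₂)

/-- Standard big-step semantics over integer memories. -/
inductive BigStep : Cmd → (ℕ → ℤ) → (ℕ → ℤ) → Prop
  | skip {M} : BigStep .skip M M
  | seq {c₁ c₂ M M' M''} :
      BigStep c₁ M M' → BigStep c₂ M' M'' → BigStep (.seq c₁ c₂) M M''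
  | assign {x e M} : BigStep (.assign x e) M (Function.update M x (evalE M e))
  | iteTrue {e₁ e₂ c₁ c₂ M M'} :
      evalE M e₁ = evalE M e₂ → BigStep c₁ M M' →
      BigStep (.ite e₁ e₂ c₁ c₂) M M'
  | iteFalse {e₁ e₂ c₁ c₂ M M'} :
      evalE M e₁ ≠ evalE M e₂ → BigStep c₂ M M' →
      BigStep (.ite e₁ e₂ c₁ c₂) M M'

def Cmd.Writes (x : ℕ) : Cmd → Prop
  | .skip => False
  | .seq c₁ c₂ => c₁.Writes x ∨ c₂.Writes x
  | .assign y _ => y = x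
  | .ite _ _ c₁ c₂ => c₁.Writes x ∨ c₂.Writes x

theorem BigStep.apply_eq_of_not_writes {C : Cmd} {M M' : ℕ → ℤ} {x : ℕ}
    (hstep : BigStep C M M') (hx : ¬ C.Writes x) : M' x = M x := by
  induction hstep with
  | skip => rfl
  | seq _ _ ih₁ ih₂ =>
    simp only [Cmd.Writes, not_or] at hx
    exact (ih₂ hx.2).trans (ih₁ hx.1)
  | assign => exact Function.update_of_ne (Ne.symm hx) _ _
  | iteTrue _ _ ih => exact ih fun h => hx (.inl h)
  | iteFalse _ _ ih => exact ih fun h => hx (.inr h)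

theorem WT.le_of_writes {Γ : ℕ → Lvl} {pc : Lvl} {C : Cmd} {x : ℕ}
    (hwt : WT Γ pc C) (hx : C.Writes x) : pc ≤ Γ x := by
  induction hwt with
  | skip => exact hx.elim
  | seq _ _ ih₁ ih₂ => exact hx.elim ih₁ ih₂
  | assign hle =>
    obtain rfl : _ = x := hx
    exact le_sup_right.trans hle
  | ite _ _ ih₁ ih₂ =>
    exact le_sup_left.trans (le_sup_left.trans (hx.elim ih₁ ih₂))

/-- Confinement: a command well-typed under a high program counter changes no
low variable. -/
theorem confinement (Γ : ℕ → Lvl) (C : Cmd) (M M' : ℕ → ℤ)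
    (hwt : WT Γ true C) (hstep : BigStep C M M') :
    ∀ x, Γ x = false → M x = M' x := by
  intro x hlow
  have hx : ¬ C.Writes x := fun hw =>
    absurd (hlow ▸ hwt.le_of_writes hw) (by decide)
  exact (hstep.apply_eq_of_not_writes hx).symm
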